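/- Let d ≥ 1 be an integer and let μ be a nonnegative Borel measure on ℝ^d satisfying Dalang's condition. For an integer n ≥ 1 and t > 0 define J_n(t) = ∫_{0<s₁<⋯<s_n<t} ∏_{j=1}^n ( ∫_{ℝ^d} e^{−(s_j−s_{j−1})|ξ|²} dμ(ξ) ) ds₁⋯ds_n, with the convention s₀ = 0. Then for every integer N ≥ 0 and every t > 0 the series Σ_{n=1}^∞ n^N · J_n(t) converges (is finite). -/

import Mathlib

/-!
For `m > 0` write `e^{-x|ξ|²} = e^{mx} e^{-x(m+|ξ|²)}`. On the simplex the increments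
`s_j - s_{j-1}` are positive and add up to `s_n < t`, so the integrand of `J_n(t)` is at most
`e^{mt} ∏_j L_m(s_j - s_{j-1})` with `L_m(x) = ∫ e^{-x(m+|ξ|²)} dμ(ξ)`. The increment map is a
unimodular linear change of variables, hence `J_n(t) ≤ e^{mt} (∫_0^∞ L_m)^n = e^{mt} Υ(m)^n`,
where by Tonelli `Υ(m) = ∫ (m+|ξ|²)⁻¹ dμ(ξ)`. Dalang's condition and dominated convergence give
`Υ(m) → 0` as `m → ∞`, so for large `m` the series is dominated by `Σ n^N Υ(m)^n < ∞`.
-/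

open MeasureTheory Set Real Filter
open scoped ENNReal Topology

theorem lintegral_fin_prod_eq_prod {E : Type*} [MeasurableSpace E] {μ : Measure E}
    [SigmaFinite μ] : ∀ {n : ℕ} {f : Fin n → E → ℝ≥0∞}, (∀ i, Measurable (f i)) →
    ∫⁻ x : Fin n → E, ∏ i, f i (x i) ∂(Measure.pi fun _ => μ) = ∏ i, ∫⁻ x, f i x ∂μ
  | 0, _, _ => by simp
  | n + 1, f, hf => by
    have hprod : Measurable fun y : Fin n → E => ∏ i, f i.succ (y i) :=
      Finset.measurable_prod _ fun i _ => (hf i.succ).comp (measurable_pi_apply i)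
    calc _ = ∫⁻ x : E × (Fin n → E), f 0 x.1 * ∏ i : Fin n, f i.succ (x.2 i)
            ∂(μ.prod (Measure.pi fun _ => μ)) := by
          rw [← ((measurePreserving_piFinSuccAbove (fun _ => μ) 0).symm).lintegral_comp_emb
            (MeasurableEquiv.measurableEmbedding _)]
          refine lintegral_congr fun x => ?_
          simp [Fin.prod_univ_succ, MeasurableEquiv.piFinSuccAbove_symm_apply]
      _ = (∫⁻ x, f 0 x ∂μ) * ∏ i : Fin n, ∫⁻ x, f i.succ x ∂μ := by
          rw [← lintegral_fin_prod_eq_prod (fun i => hf i.succ),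
            ← lintegral_prod_mul (hf 0).aemeasurable hprod.aemeasurable]
      _ = ∏ i, ∫⁻ x, f i x ∂μ := by rw [Fin.prod_univ_succ]

section Increments

variable {n : ℕ}

variable (n) in
def increments : (Fin (n + 1) → ℝ) →ₗ[ℝ] (Fin (n + 1) → ℝ) where
  toFun s j := s j - if j = 0 then 0 else s (j - 1)
  map_add' s s' := by ext j; dsimp only [Pi.add_apply]; split_ifs <;> ring
  map_smul' c s := by
    ext j; dsimp only [Pi.smul_apply, smul_eq_mul, RingHom.id_apply]; split_ifs <;> ring

theorem increments_apply (s : Fin (n + 1) → ℝ) (j : Fin (n + 1)) :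
    increments n s j = s j - if j = 0 then 0 else s (j - 1) := rfl

variable (n) in
theorem det_increments : LinearMap.det (increments n) = 1 := by
  classical
  rw [← LinearMap.det_toMatrix', Matrix.det_of_isLowerTriangular]
  · refine Finset.prod_eq_one fun i _ => ?_
    rw [LinearMap.toMatrix'_apply, increments_apply]
    split_ifs with hi
    · simp
    · simp [(Fin.sub_one_lt_iff.2 (Fin.pos_iff_ne_zero.2 hi)).ne]
  · intro i j (hij : i < j)
    rw [LinearMap.toMatrix'_apply, increments_apply]
    split_ifs with hi
    · simp [hij.ne]
    · simp [hij.ne, ((Fin.sub_one_lt_iff.2 (Fin.pos_iff_ne_zero.2 hi)).trans hij).ne]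

variable (n) in
theorem measurePreserving_increments : MeasurePreserving (increments n) := by
  refine ⟨(increments n).continuous_of_finiteDimensional.measurable, ?_⟩
  rw [Real.map_linearMap_volume_pi_eq_smul_volume_pi (by simp [det_increments]),
    det_increments]
  simp

theorem sum_increments (s : Fin (n + 1) → ℝ) : ∑ j, increments n s j = s (Fin.last n) := by
  have hprev (j : Fin (n + 1)) :
      (if j = 0 then 0 else s (j - 1)) = (Fin.cons (0 : ℝ) s : Fin (n + 2) → ℝ) j.castSucc := by
    split_ifs with hj
    · simp [hj]
    · have := Fin.val_ne_zero_iff.mpr hj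
      rw [show j.castSucc = (j - 1).succ by ext; simp [Fin.coe_sub_one, hj]; omega,
        Fin.cons_succ]
  have h_succ := Fin.sum_univ_succ (Fin.cons 0 s : Fin (n + 2) → ℝ)
  have h_castSucc := Fin.sum_univ_castSucc (Fin.cons 0 s : Fin (n + 2) → ℝ)
  simp only [increments_apply, hprev, Finset.sum_sub_distrib, Fin.cons_succ, Fin.cons_zero]
    at h_succ h_castSucc ⊢
  rw [← Fin.succ_last, Fin.cons_succ] at h_castSucc
  linarith

theorem increments_pos {s : Fin (n + 1) → ℝ} (hs : StrictMono s) (h0 : 0 < s 0)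
    (j : Fin (n + 1)) : 0 < increments n s j := by
  rw [increments_apply]
  split_ifs with hj
  · simpa [hj] using h0
  · exact sub_pos.2 (hs (Fin.sub_one_lt_iff.2 (Fin.pos_iff_ne_zero.2 hj)))

theorem setLIntegral_prod_comp_increments_le {f : ℝ → ℝ≥0∞} (hf : Measurable f)
    {S : Set (Fin (n + 1) → ℝ)} (hS : ∀ s ∈ S, StrictMono s ∧ 0 < s 0) :
    ∫⁻ s in S, ∏ j, f (increments n s j) ≤ (∫⁻ x in Ioi 0, f x) ^ (n + 1) := by
  have hpos : S ⊆ increments n ⁻¹' univ.pi fun _ => Ioi 0 := fun s hs j _ =>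
    increments_pos (hS s hs).1 (hS s hs).2 j
  calc ∫⁻ s in S, ∏ j, f (increments n s j)
      ≤ ∫⁻ s in increments n ⁻¹' univ.pi fun _ => Ioi 0, ∏ j, f (increments n s j) :=
        lintegral_mono_set hpos
    _ = ∫⁻ x : Fin (n + 1) → ℝ in univ.pi fun _ => Ioi 0, ∏ j, f (x j) :=
        (measurePreserving_increments n).setLIntegral_comp_preimage
          (MeasurableSet.univ_pi fun _ => measurableSet_Ioi)
          (Finset.measurable_prod _ fun j _ => hf.comp (measurable_pi_apply j))
    _ = (∫⁻ x in Ioi 0, f x) ^ (n + 1) := by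
        rw [volume_pi, Measure.restrict_pi_pi, lintegral_fin_prod_eq_prod fun _ => hf,
          Finset.prod_const, Finset.card_univ, Fintype.card_fin]

end Increments

theorem measurableSet_simplex (n : ℕ) (t : ℝ) :
    MeasurableSet {s : Fin (n + 1) → ℝ | StrictMono s ∧ ∀ i, s i ∈ Ioo 0 t} := by
  simp only [StrictMono, mem_Ioo]
  measurability

theorem lintegral_Ioi_exp_neg_mul {c : ℝ} (hc : 0 < c) :
    ∫⁻ x in Ioi (0 : ℝ), ENNReal.ofReal (Real.exp (-x * c)) = ENNReal.ofReal c⁻¹ := by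
  rw [← ofReal_integral_eq_lintegral_ofReal]
  · have := integral_comp_mul_right_Ioi (fun x => Real.exp (-x)) 0 hc
    simp only [zero_mul, smul_eq_mul, integral_exp_neg_Ioi, neg_zero, Real.exp_zero,
      mul_one] at this
    simp only [neg_mul, this]
  · exact (exp_neg_integrableOn_Ioi 0 hc).congr_fun (fun x _ => by ring_nf) measurableSet_Ioi
  · exact Eventually.of_forall fun x => Real.exp_nonneg _

theorem tsum_succ_pow_mul_pow_lt_top (N : ℕ) {r : ℝ≥0∞} (hr : r < 1) :
    ∑' n : ℕ, ((n + 1 : ℕ) : ℝ≥0∞) ^ N * r ^ (n + 1) < ⊤ := by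
  lift r to NNReal using ne_top_of_lt hr
  have hgeom : Summable fun n : ℕ => (n : ℝ) ^ N * (r : ℝ) ^ n :=
    summable_pow_mul_geometric_of_norm_lt_one N (by simpa using hr)
  have hsum : Summable fun n : ℕ => ((n + 1 : ℕ) : NNReal) ^ N * r ^ (n + 1) := by
    rw [← NNReal.summable_coe]
    exact_mod_cast (summable_nat_add_iff 1).2 hgeom
  simpa using (ENNReal.tsum_coe_ne_top_iff_summable.2 hsum).lt_top

section Dalang

variable {E : Type*} [NormedAddCommGroup E] [MeasurableSpace E] {μ : Measure E}

variable (μ) in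
noncomputable def dalangIntegral (m : ℝ) : ℝ≥0∞ :=
  ∫⁻ ξ, ENNReal.ofReal (m + ‖ξ‖ ^ 2)⁻¹ ∂μ

variable (μ) in
noncomputable def laplaceMass (m x : ℝ) : ℝ≥0∞ :=
  ∫⁻ ξ, ENNReal.ofReal (Real.exp (-x * (m + ‖ξ‖ ^ 2))) ∂μ

theorem lintegral_exp_neg_mul_sq_norm (m x : ℝ) :
    ∫⁻ ξ, ENNReal.ofReal (Real.exp (-x * ‖ξ‖ ^ 2)) ∂μ
      = ENNReal.ofReal (Real.exp (m * x)) * laplaceMass μ m x := by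
  rw [laplaceMass, ← lintegral_const_mul' _ _ ENNReal.ofReal_ne_top]
  refine lintegral_congr fun ξ => ?_
  rw [← ENNReal.ofReal_mul (Real.exp_nonneg _), ← Real.exp_add]
  ring_nf

theorem prod_lintegral_exp_neg_increments_le {n : ℕ} {m t : ℝ} (hm : 0 ≤ m)
    {s : Fin (n + 1) → ℝ} (hst : s (Fin.last n) ≤ t) :
    ∏ j, ∫⁻ ξ, ENNReal.ofReal (Real.exp (-increments n s j * ‖ξ‖ ^ 2)) ∂μ
      ≤ ENNReal.ofReal (Real.exp (m * t)) * ∏ j, laplaceMass μ m (increments n s j) := by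
  simp_rw [lintegral_exp_neg_mul_sq_norm m, Finset.prod_mul_distrib,
    ← ENNReal.ofReal_prod_of_nonneg fun _ _ => (Real.exp_pos _).le, ← Real.exp_sum,
    ← Finset.mul_sum, sum_increments]
  gcongr

variable [OpensMeasurableSpace E]

theorem sigmaFinite_of_lintegral_inv_one_add_sq_norm_lt_top
    (hD : ∫⁻ ξ, ENNReal.ofReal (1 + ‖ξ‖ ^ 2)⁻¹ ∂μ < ⊤) : SigmaFinite μ := by
  refine ⟨⟨⟨fun n => Metric.closedBall 0 n, fun _ => trivial, fun n => ?_,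
    Metric.iUnion_closedBall_nat 0⟩⟩⟩
  have hε : ENNReal.ofReal (1 + (n : ℝ) ^ 2)⁻¹ ≠ 0 := by positivity
  calc μ (Metric.closedBall 0 n)
      ≤ μ {ξ | ENNReal.ofReal (1 + (n : ℝ) ^ 2)⁻¹ ≤ ENNReal.ofReal (1 + ‖ξ‖ ^ 2)⁻¹} := by
        refine measure_mono fun ξ hξ => ENNReal.ofReal_le_ofReal (inv_anti₀ (by positivity) ?_)
        have : ‖ξ‖ ≤ n := mem_closedBall_zero_iff.1 hξ
        gcongr
    _ ≤ (∫⁻ ξ, ENNReal.ofReal (1 + ‖ξ‖ ^ 2)⁻¹ ∂μ) / ENNReal.ofReal (1 + (n : ℝ) ^ 2)⁻¹ :=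
        meas_ge_le_lintegral_div (by fun_prop) hε ENNReal.ofReal_ne_top
    _ < ⊤ := ENNReal.div_lt_top hD.ne hε

theorem tendsto_dalangIntegral_atTop_zero
    (hD : ∫⁻ ξ, ENNReal.ofReal (1 + ‖ξ‖ ^ 2)⁻¹ ∂μ < ⊤) :
    Tendsto (dalangIntegral μ) atTop (𝓝 0) := by
  have := tendsto_lintegral_filter_of_dominated_convergence (μ := μ) (l := atTop)
    (F := fun m ξ => ENNReal.ofReal (m + ‖ξ‖ ^ 2)⁻¹) (f := 0)
    (fun ξ => ENNReal.ofReal (1 + ‖ξ‖ ^ 2)⁻¹)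
    (Eventually.of_forall fun m => by fun_prop) ?_ hD.ne ?_
  · simp only [Pi.zero_apply, lintegral_zero] at this
    exact this
  · filter_upwards [eventually_ge_atTop 1] with m hm
    exact Eventually.of_forall fun ξ =>
      ENNReal.ofReal_le_ofReal (inv_anti₀ (by positivity) (by gcongr))
  · refine Eventually.of_forall fun ξ => ?_
    simpa using ENNReal.tendsto_ofReal
      (tendsto_inv_atTop_zero.comp (tendsto_atTop_add_const_right _ _ tendsto_id))

theorem exists_pos_dalangIntegral_lt_one
    (hD : ∫⁻ ξ, ENNReal.ofReal (1 + ‖ξ‖ ^ 2)⁻¹ ∂μ < ⊤) :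
    ∃ m : ℝ, 0 < m ∧ dalangIntegral μ m < 1 :=
  ((eventually_gt_atTop 0).and
    ((tendsto_dalangIntegral_atTop_zero hD).eventually_lt_const zero_lt_one)).exists

variable [SFinite μ]

theorem measurable_laplaceMass (m : ℝ) : Measurable (laplaceMass μ m) :=
  Measurable.lintegral_prod_right (by fun_prop)

theorem lintegral_Ioi_laplaceMass {m : ℝ} (hm : 0 < m) :
    ∫⁻ x in Ioi 0, laplaceMass μ m x = dalangIntegral μ m := by
  unfold laplaceMass
  rw [lintegral_lintegral_swap (by fun_prop)]
  exact lintegral_congr fun ξ => lintegral_Ioi_exp_neg_mul (by positivity)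

theorem setLIntegral_simplex_prod_le {m : ℝ} (hm : 0 < m) (n : ℕ) (t : ℝ) :
    ∫⁻ s in {s : Fin (n + 1) → ℝ | StrictMono s ∧ ∀ i, s i ∈ Ioo 0 t},
        ∏ j, ∫⁻ ξ, ENNReal.ofReal (Real.exp (-increments n s j * ‖ξ‖ ^ 2)) ∂μ
      ≤ ENNReal.ofReal (Real.exp (m * t)) * dalangIntegral μ m ^ (n + 1) := by
  set S := {s : Fin (n + 1) → ℝ | StrictMono s ∧ ∀ i, s i ∈ Ioo 0 t}
  calc _ ≤ ∫⁻ s in S, ENNReal.ofReal (Real.exp (m * t)) *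
          ∏ j, laplaceMass μ m (increments n s j) :=
        setLIntegral_mono' (measurableSet_simplex n t) fun s hs =>
          prod_lintegral_exp_neg_increments_le hm.le (hs.2 (Fin.last n)).2.le
    _ = ENNReal.ofReal (Real.exp (m * t)) *
          ∫⁻ s in S, ∏ j, laplaceMass μ m (increments n s j) :=
        lintegral_const_mul' _ _ ENNReal.ofReal_ne_top
    _ ≤ _ := by
        rw [← lintegral_Ioi_laplaceMass hm]
        gcongr
        exact setLIntegral_prod_comp_increments_le (measurable_laplaceMass m)
          fun s hs => ⟨hs.1, (hs.2 0).1⟩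

end Dalang

theorem series_of_simplex_integrals_finite_general
    (d : ℕ) (μ : Measure (EuclideanSpace ℝ (Fin d)))
    (hDalang : ∫⁻ ξ, ENNReal.ofReal (1 + ‖ξ‖ ^ 2)⁻¹ ∂μ < ⊤)
    (N : ℕ) (t : ℝ) :
    ∑' n : ℕ, ((n + 1 : ℕ) : ENNReal) ^ N *
      ∫⁻ s : Fin (n + 1) → ℝ in {s | StrictMono s ∧ ∀ i, s i ∈ Set.Ioo 0 t},
        ∏ j : Fin (n + 1),
          ∫⁻ ξ, ENNReal.ofReal
            (Real.exp (-(s j - (if j = 0 then 0 else s (j - 1))) * ‖ξ‖ ^ 2)) ∂μ < ⊤ := by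
  have := sigmaFinite_of_lintegral_inv_one_add_sq_norm_lt_top hDalang
  obtain ⟨m, hm, hY⟩ := exists_pos_dalangIntegral_lt_one hDalang
  simp only [← increments_apply]
  calc _ ≤ ∑' n : ℕ, ((n + 1 : ℕ) : ℝ≥0∞) ^ N *
          (ENNReal.ofReal (Real.exp (m * t)) * dalangIntegral μ m ^ (n + 1)) :=
        ENNReal.tsum_le_tsum fun n => by gcongr; exact setLIntegral_simplex_prod_le hm n t
    _ = ENNReal.ofReal (Real.exp (m * t)) *
          ∑' n : ℕ, ((n + 1 : ℕ) : ℝ≥0∞) ^ N * dalangIntegral μ m ^ (n + 1) := by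
        rw [← ENNReal.tsum_mul_left]
        simp_rw [mul_left_comm]
    _ < ⊤ := ENNReal.mul_lt_top ENNReal.ofReal_lt_top (tsum_succ_pow_mul_pow_lt_top N hY)

/-- Under Dalang's condition, with
`J_n(t) = ∫_{0<s₁<⋯<s_n<t} ∏_{j=1}^n (∫ e^{-(s_j-s_{j-1})|ξ|²} dμ(ξ)) ds` (where `s₀ = 0`),
the series `Σ_{n≥1} n^N J_n(t)` converges for every `N ≥ 0` and `t > 0`. -/
theorem series_of_simplex_integrals_finite
    (d : ℕ) (hd : 1 ≤ d) (μ : Measure (EuclideanSpace ℝ (Fin d)))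
    (hDalang : ∫⁻ ξ, ENNReal.ofReal (1 + ‖ξ‖ ^ 2)⁻¹ ∂μ < ⊤)
    (N : ℕ) (t : ℝ) (ht : 0 < t) :
    ∑' n : ℕ, ((n + 1 : ℕ) : ENNReal) ^ N *
      ∫⁻ s : Fin (n + 1) → ℝ in {s | StrictMono s ∧ ∀ i, s i ∈ Set.Ioo 0 t},
        ∏ j : Fin (n + 1),
          ∫⁻ ξ, ENNReal.ofReal
            (Real.exp (-(s j - (if j = 0 then 0 else s (j - 1))) * ‖ξ‖ ^ 2)) ∂μ < ⊤ :=
  series_of_simplex_integrals_finite_general d μ hDalang N t
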